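/- The function f(t) = t·φ'(t)/φ(t) = t(e^t − 1)/(e^t − 1 − t), extended at 0 by continuity with value 2, is strictly increasing on ℝ. -/

import Mathlib

open Real

noncomputable def fFn (t : ℝ) : ℝ :=
  if t = 0 then 2 else t * (Real.exp t - 1) / (Real.exp t - 1 - t)

lemma phi_pos {t : ℝ} (ht : t ≠ 0) : 0 < Real.exp t - 1 - t := by
  have := Real.add_one_lt_exp ht
  linarith

-- key derivative-positivity inequality
lemma key_ineq {t : ℝ} (ht : t ≠ 0) : t ^ 2 * Real.exp t < (Real.exp t - 1) ^ 2 := by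
  have ha : (0:ℝ) < Real.exp (t / 2) := Real.exp_pos _
  have hexp : Real.exp t = Real.exp (t / 2) * Real.exp (t / 2) := by
    rw [← Real.exp_add]; ring_nf
  have hinv : Real.exp (-(t / 2)) = 1 / Real.exp (t / 2) := by
    rw [Real.exp_neg]; ring
  have h0 : (1 / Real.exp (t / 2)) * Real.exp (t / 2) = 1 := by field_simp
  rcases lt_or_gt_of_ne ht with h | h
  · have hs : -(t / 2) < Real.sinh (-(t / 2)) :=
      Real.self_lt_sinh_iff.2 (by linarith)
    rw [Real.sinh_eq, neg_neg, hinv] at hs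
    have h1 : -t * Real.exp (t / 2) < 1 - Real.exp (t / 2) * Real.exp (t / 2) := by
      nlinarith [mul_lt_mul_of_pos_right hs ha]
    have h2 : 0 < -t * Real.exp (t / 2) := mul_pos (by linarith) ha
    have h3 : (-t * Real.exp (t/2)) * (-t * Real.exp (t/2)) <
        (1 - Real.exp (t/2) * Real.exp (t/2)) * (1 - Real.exp (t/2) * Real.exp (t/2)) := by
      nlinarith
    rw [hexp]; nlinarith
  · have hs : t / 2 < Real.sinh (t / 2) := Real.self_lt_sinh_iff.2 (by linarith)
    rw [Real.sinh_eq, hinv] at hs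
    have h1 : t * Real.exp (t / 2) < Real.exp (t / 2) * Real.exp (t / 2) - 1 := by
      nlinarith [mul_lt_mul_of_pos_right hs ha]
    have h2 : 0 < t * Real.exp (t / 2) := mul_pos h ha
    have h3 : (t * Real.exp (t/2)) * (t * Real.exp (t/2)) <
        (Real.exp (t/2) * Real.exp (t/2) - 1) * (Real.exp (t/2) * Real.exp (t/2) - 1) := by
      nlinarith
    rw [hexp]; nlinarith

-- auxiliary function for comparing with 2
noncomputable def hAux (t : ℝ) : ℝ := t * Real.exp t + t + 2 - 2 * Real.exp t

lemma hAux_hasDeriv (t : ℝ) : HasDerivAt hAux ((t - 1) * Real.exp t + 1) t := by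
  have h1 : HasDerivAt (fun t : ℝ => t * Real.exp t + t + 2 - 2 * Real.exp t)
      (1 * Real.exp t + t * Real.exp t + 1 - 2 * Real.exp t) t := by
    exact ((((hasDerivAt_id t).mul (Real.hasDerivAt_exp t)).add (hasDerivAt_id t)).add_const 2).sub
      ((Real.hasDerivAt_exp t).const_mul 2)
  convert h1 using 1
  rfl
  ring

lemma hAux_deriv_pos {t : ℝ} (ht : t ≠ 0) : 0 < (t - 1) * Real.exp t + 1 := by
  have h := Real.add_one_lt_exp (neg_ne_zero.2 ht)
  rw [Real.exp_neg] at h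
  have he : (0:ℝ) < Real.exp t := Real.exp_pos t
  have h3 := mul_lt_mul_of_pos_right h he
  rw [inv_mul_cancel₀ (ne_of_gt he)] at h3
  nlinarith

lemma hAux_pos {t : ℝ} (ht : 0 < t) : 0 < hAux t := by
  have hmono : StrictMonoOn hAux (Set.Ici 0) := by
    apply strictMonoOn_of_deriv_pos (convex_Ici 0)
    · exact fun x _ => ((hAux_hasDeriv x).continuousAt).continuousWithinAt
    · intro x hx
      rw [interior_Ici] at hx
      rw [(hAux_hasDeriv x).deriv]
      exact hAux_deriv_pos (ne_of_gt hx)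
  have := hmono (Set.self_mem_Ici) (Set.mem_Ici.2 ht.le) ht
  simpa [hAux] using this

lemma hAux_neg {t : ℝ} (ht : t < 0) : hAux t < 0 := by
  have hmono : StrictMonoOn hAux (Set.Iic 0) := by
    apply strictMonoOn_of_deriv_pos (convex_Iic 0)
    · exact fun x _ => ((hAux_hasDeriv x).continuousAt).continuousWithinAt
    · intro x hx
      rw [interior_Iic] at hx
      rw [(hAux_hasDeriv x).deriv]
      exact hAux_deriv_pos (ne_of_lt hx)
  have := hmono (Set.mem_Iic.2 ht.le) (Set.self_mem_Iic) ht
  simpa [hAux] using this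

noncomputable def gFn (t : ℝ) : ℝ := t * (Real.exp t - 1) / (Real.exp t - 1 - t)

lemma fFn_eq_gFn {t : ℝ} (ht : t ≠ 0) : fFn t = gFn t := by
  simp [fFn, gFn, ht]

lemma fFn_eventually_eq {t : ℝ} (ht : t ≠ 0) : fFn =ᶠ[nhds t] gFn := by
  filter_upwards [isOpen_ne.mem_nhds ht] with x hx
  exact fFn_eq_gFn hx

lemma gFn_hasDeriv {t : ℝ} (ht : t ≠ 0) :
    HasDerivAt gFn (((Real.exp t - 1) ^ 2 - t ^ 2 * Real.exp t) / (Real.exp t - 1 - t) ^ 2) t := by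
  have hd : Real.exp t - 1 - t ≠ 0 := ne_of_gt (phi_pos ht)
  have hnum : HasDerivAt (fun t : ℝ => t * (Real.exp t - 1))
      (1 * (Real.exp t - 1) + t * Real.exp t) t :=
    (hasDerivAt_id t).mul ((Real.hasDerivAt_exp t).sub_const 1)
  have hden : HasDerivAt (fun t : ℝ => Real.exp t - 1 - t) (Real.exp t - 1) t := by
    have := ((Real.hasDerivAt_exp t).sub_const 1).sub (hasDerivAt_id t)
    exact this
  have := hnum.div hden hd
  convert this using 1
  rfl
  rfl
  rfl
  ring

lemma deriv_fFn_pos {t : ℝ} (ht : t ≠ 0) : 0 < deriv fFn t := by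
  rw [(fFn_eventually_eq ht).deriv_eq, (gFn_hasDeriv ht).deriv]
  have h1 := key_ineq ht
  have h2 := phi_pos ht
  apply div_pos (by linarith) (by positivity)

lemma fFn_gt_two {t : ℝ} (ht : 0 < t) : 2 < fFn t := by
  rw [fFn_eq_gFn (ne_of_gt ht)]
  have hφ := phi_pos (ne_of_gt ht)
  rw [gFn, lt_div_iff₀ hφ]
  have := hAux_pos ht
  simp only [hAux] at this
  nlinarith

lemma fFn_lt_two {t : ℝ} (ht : t < 0) : fFn t < 2 := by
  rw [fFn_eq_gFn (ne_of_lt ht)]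
  have hφ := phi_pos (ne_of_lt ht)
  rw [gFn, div_lt_iff₀ hφ]
  have := hAux_neg ht
  simp only [hAux] at this
  nlinarith

lemma fFn_mono_Ioi : StrictMonoOn fFn (Set.Ioi 0) := by
  apply strictMonoOn_of_deriv_pos (convex_Ioi 0)
  · intro x hx
    have hx0 : x ≠ 0 := ne_of_gt hx
    exact (((gFn_hasDeriv hx0).differentiableAt.continuousAt.congr
      (fFn_eventually_eq hx0).symm)).continuousWithinAt
  · intro x hx
    rw [interior_Ioi] at hx
    exact deriv_fFn_pos (ne_of_gt hx)

lemma fFn_mono_Iio : StrictMonoOn fFn (Set.Iio 0) := by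
  apply strictMonoOn_of_deriv_pos (convex_Iio 0)
  · intro x hx
    have hx0 : x ≠ 0 := ne_of_lt hx
    exact (((gFn_hasDeriv hx0).differentiableAt.continuousAt.congr
      (fFn_eventually_eq hx0).symm)).continuousWithinAt
  · intro x hx
    rw [interior_Iio] at hx
    exact deriv_fFn_pos (ne_of_lt hx)

theorem stmt_2 : StrictMono fFn := by
  intro x y hxy
  have hf0 : fFn 0 = 2 := by simp [fFn]
  rcases lt_trichotomy x 0 with hx | hx | hx
  · rcases lt_trichotomy y 0 with hy | hy | hy
    · exact fFn_mono_Iio hx hy hxy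
    · rw [hy, hf0]; exact fFn_lt_two hx
    · exact lt_trans (fFn_lt_two hx) (fFn_gt_two hy)
  · subst hx
    rw [hf0]
    exact fFn_gt_two (by linarith)
  · exact fFn_mono_Ioi hx (lt_trans hx hxy) hxy
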